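/- (Theorem 2: Schwarz–Pick-type lemma for self-maps of the spectral unit ball) Let G : Ω_n → Ω_n be holomorphic (n ≥ 2) and let d_G be the degree of the minimal polynomial of G(0). Then for every X ∈ Ω_n: r(G(X)) ≤ (r(X)^{1/d_G} + r(G(0))) / (1 + r(G(0))·r(X)^{1/d_G}). -/

import Mathlib

attribute [local instance] Matrix.normedAddCommGroup Matrix.normedSpace

/-- The spectral radius of a complex `n × n` matrix. -/
noncomputable def sRad {n : ℕ} (A : Matrix (Fin n) (Fin n) ℂ) : ℝ :=
  sSup ((fun μ => ‖μ‖) '' spectrum ℂ A)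

/-- The spectral unit ball `Ω_n`. -/
def specBall (n : ℕ) : Set (Matrix (Fin n) (Fin n) ℂ) := {W | sRad W < 1}

/-!
Let `A = G 0` and let `B` be the finite Blaschke product whose zeros are the roots of the minimal
polynomial of `A`, with multiplicity, so that `B` has `d_G` factors. Applied to matrices,
`W ↦ B(W)` is holomorphic on `Ω_n`, maps eigenvalues `μ` to `B(μ)`, hence maps `Ω_n` into its
closure, and kills `A`. So `Φ = B ∘ G` satisfies `Φ 0 = 0` and the Ransford–White inequality
`r(Φ X) ≤ r X` applies. That inequality is a Schwarz lemma on the slice `z ↦ Φ((z / t) • X)`,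
`r X < t < 1`: writing the slice as `z • M z`, the maximum principle for the coefficients of the
characteristic polynomial of `(M z) ^ j`, combined with Cauchy's bound on roots, keeps the
eigenvalues of `M z` in the closed unit disc. Finally every Möbius factor of `B` is at least
`(|μ| - r(A)) / (1 - r(A) |μ|)` in modulus, so this quantity to the power `d_G` is at most `r X`
for `μ` in the spectrum of `G X`, and solving for `|μ|` gives the bound.
-/

open Polynomial Metric Filter Topology Set ComplexConjugate

section SpectralRadius

variable {n : ℕ}

theorem norm_le_sRad {A : Matrix (Fin n) (Fin n) ℂ} {μ : ℂ} (h : μ ∈ spectrum ℂ A) :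
    ‖μ‖ ≤ sRad A :=
  le_csSup (A.finite_spectrum.image _).bddAbove ⟨μ, h, rfl⟩

variable [NeZero n]

theorem Matrix.spectrum_nonempty (A : Matrix (Fin n) (Fin n) ℂ) : (spectrum ℂ A).Nonempty :=
  spectrum.nonempty_of_isAlgClosed_of_finiteDimensional ℂ A

theorem sRad_le {A : Matrix (Fin n) (Fin n) ℂ} {B : ℝ} (h : ∀ μ ∈ spectrum ℂ A, ‖μ‖ ≤ B) :
    sRad A ≤ B :=
  csSup_le ((Matrix.spectrum_nonempty A).image _) (by rintro _ ⟨μ, hμ, rfl⟩; exact h μ hμ)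

theorem sRad_nonneg (A : Matrix (Fin n) (Fin n) ℂ) : 0 ≤ sRad A :=
  let ⟨_, hμ⟩ := Matrix.spectrum_nonempty A
  (norm_nonneg _).trans (norm_le_sRad hμ)

theorem mul_mem_spectrum_smul {A : Matrix (Fin n) (Fin n) ℂ} {c : ℂ} (k : ℂ)
    (hc : c ∈ spectrum ℂ A) : k * c ∈ spectrum ℂ (k • A) := by
  rw [spectrum.smul_eq_smul k A (Matrix.spectrum_nonempty A)]
  exact ⟨c, hc, rfl⟩

theorem exists_mem_spectrum_of_mem_spectrum_smul {A : Matrix (Fin n) (Fin n) ℂ} {k μ : ℂ}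
    (hμ : μ ∈ spectrum ℂ (k • A)) : ∃ c ∈ spectrum ℂ A, μ = k * c := by
  rw [spectrum.smul_eq_smul k A (Matrix.spectrum_nonempty A)] at hμ
  obtain ⟨c, hc, rfl⟩ := hμ
  exact ⟨c, hc, rfl⟩

theorem sRad_smul_le (c : ℂ) (A : Matrix (Fin n) (Fin n) ℂ) : sRad (c • A) ≤ ‖c‖ * sRad A := by
  refine sRad_le fun μ hμ => ?_
  obtain ⟨ν, hν, rfl⟩ := exists_mem_spectrum_of_mem_spectrum_smul hμ
  rw [norm_mul]
  exact mul_le_mul_of_nonneg_left (norm_le_sRad hν) (norm_nonneg c)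

theorem zero_mem_specBall : (0 : Matrix (Fin n) (Fin n) ℂ) ∈ specBall n := by
  have h := sRad_smul_le 0 (0 : Matrix (Fin n) (Fin n) ℂ)
  rw [zero_smul, norm_zero, zero_mul] at h
  exact h.trans_lt one_pos

end SpectralRadius

section CoefficientBounds

theorem Complex.norm_multiset_prod (s : Multiset ℂ) : ‖s.prod‖ = (s.map fun x => ‖x‖).prod :=
  map_multiset_prod (normHom : ℂ →*₀ ℝ) s

theorem Multiset.norm_prod_le_one {s : Multiset ℂ} (hs : ∀ x ∈ s, ‖x‖ ≤ 1) : ‖s.prod‖ ≤ 1 := by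
  calc ‖s.prod‖ = (s.map fun x => ‖x‖).prod := Complex.norm_multiset_prod s
    _ ≤ (s.map fun _ => (1 : ℝ)).prod :=
        Multiset.prod_map_le_prod_map₀ _ _ (fun x _ => norm_nonneg x) hs
    _ = 1 := by simp

theorem Multiset.norm_esymm_le_choose {s : Multiset ℂ} (hs : ∀ x ∈ s, ‖x‖ ≤ 1) (k : ℕ) :
    ‖s.esymm k‖ ≤ (Multiset.card s).choose k := by
  have hprod : ∀ x ∈ (s.powersetCard k).map fun t => ‖t.prod‖, x ≤ 1 := by
    simp only [Multiset.mem_map, Multiset.mem_powersetCard]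
    rintro _ ⟨t, ⟨hts, -⟩, rfl⟩
    exact Multiset.norm_prod_le_one fun x hx => hs x (Multiset.mem_of_le hts hx)
  calc ‖s.esymm k‖ ≤ ((s.powersetCard k).map fun t => ‖t.prod‖).sum := by
        rw [Multiset.esymm]
        simpa [Multiset.map_map] using norm_multiset_sum_le ((s.powersetCard k).map Multiset.prod)
    _ ≤ Multiset.card ((s.powersetCard k).map fun t => ‖t.prod‖) • 1 :=
        Multiset.sum_le_card_nsmul _ _ hprod
    _ = (Multiset.card s).choose k := by simp

theorem Matrix.norm_charpoly_coeff_le_two_pow {n : ℕ} (A : Matrix (Fin n) (Fin n) ℂ)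
    (hA : ∀ μ ∈ spectrum ℂ A, ‖μ‖ ≤ 1) (i : ℕ) : ‖A.charpoly.coeff i‖ ≤ 2 ^ n := by
  have hsplit := IsAlgClosed.splits A.charpoly
  have hdeg : A.charpoly.natDegree = n := by simp
  have hcard : Multiset.card A.charpoly.roots = n := (splits_iff_card_roots.mp hsplit).trans hdeg
  rcases le_or_gt i n with hi | hi
  · rw [coeff_eq_esymm_roots_of_splits hsplit (hdeg.symm ▸ hi), A.charpoly_monic.leadingCoeff,
      one_mul, norm_mul, norm_pow, norm_neg, norm_one, one_pow, one_mul]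
    have hroots : ∀ μ ∈ A.charpoly.roots, ‖μ‖ ≤ 1 := fun μ hμ =>
      hA μ (Matrix.mem_spectrum_iff_isRoot_charpoly.mpr (isRoot_of_mem_roots hμ))
    refine (Multiset.norm_esymm_le_choose hroots _).trans ?_
    rw [hcard]
    exact_mod_cast Nat.choose_le_two_pow _ _
  · rw [coeff_eq_zero_of_natDegree_lt (hdeg.symm ▸ hi), norm_zero]
    positivity

theorem Matrix.norm_lt_of_mem_spectrum_of_norm_charpoly_coeff_le {n : ℕ}
    {A : Matrix (Fin n) (Fin n) ℂ} {C : ℝ} (hC : ∀ i, ‖A.charpoly.coeff i‖ ≤ C) {μ : ℂ}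
    (hμ : μ ∈ spectrum ℂ A) : ‖μ‖ < C + 1 := by
  have hC0 : 0 ≤ C := (norm_nonneg _).trans (hC 0)
  have hμ' := (Matrix.mem_spectrum_iff_isRoot_charpoly.mp hμ).norm_lt_cauchyBound
    A.charpoly_monic.ne_zero
  have hsup : ((Finset.range A.charpoly.natDegree).sup fun i => ‖A.charpoly.coeff i‖₊) ≤
      C.toNNReal :=
    Finset.sup_le fun i _ => by
      rw [← NNReal.coe_le_coe, Real.coe_toNNReal _ hC0, coe_nnnorm]
      exact hC i
  rw [cauchyBound, A.charpoly_monic.leadingCoeff, nnnorm_one, div_one] at hμ'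
  have := NNReal.coe_lt_coe.mpr (hμ'.trans_le (add_le_add_left hsup 1))
  simpa [Real.coe_toNNReal _ hC0] using this

end CoefficientBounds

section MatrixDifferentiability

variable {E ι : Type*} [NormedAddCommGroup E] [NormedSpace ℂ E] {s : Set E} [Fintype ι]

theorem DifferentiableOn.mvPolynomial_eval {σ : Type*} {f : E → σ → ℂ}
    (hf : ∀ i, DifferentiableOn ℂ (fun x => f x i) s) (p : MvPolynomial σ ℂ) :
    DifferentiableOn ℂ (fun x => MvPolynomial.eval (f x) p) s := by
  induction p using MvPolynomial.induction_on with
  | C a => simpa only [MvPolynomial.eval_C] using differentiableOn_const a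
  | add p q hp hq => simpa only [map_add] using hp.fun_add hq
  | mul_X p i hp => simpa only [map_mul, MvPolynomial.eval_X] using hp.fun_mul (hf i)

variable {W V : E → Matrix ι ι ℂ}

theorem differentiableOn_matrix_iff :
    DifferentiableOn ℂ W s ↔ ∀ i j, DifferentiableOn ℂ (fun x => W x i j) s :=
  differentiableOn_pi.trans (forall_congr' fun _ => differentiableOn_pi)

theorem DifferentiableOn.matrix_apply (hW : DifferentiableOn ℂ W s) (i j : ι) :
    DifferentiableOn ℂ (fun x => W x i j) s :=
  differentiableOn_matrix_iff.mp hW i j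

theorem DifferentiableOn.eval_mvPolynomial_entries (hW : DifferentiableOn ℂ W s)
    (p : MvPolynomial (ι × ι) ℂ) :
    DifferentiableOn ℂ (fun x => MvPolynomial.eval (fun q => W x q.1 q.2) p) s :=
  (DifferentiableOn.mvPolynomial_eval (fun q => hW.matrix_apply q.1 q.2) p :)

theorem DifferentiableOn.matrix_mul (hW : DifferentiableOn ℂ W s)
    (hV : DifferentiableOn ℂ V s) : DifferentiableOn ℂ (fun x => W x * V x) s := by
  rw [differentiableOn_matrix_iff] at hW hV ⊢
  intro i j
  simp only [Matrix.mul_apply]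
  exact .fun_sum fun k _ => (hW i k).mul (hV k j)

variable [DecidableEq ι]

theorem DifferentiableOn.matrix_pow (hW : DifferentiableOn ℂ W s) (j : ℕ) :
    DifferentiableOn ℂ (fun x => W x ^ j) s := by
  induction j with
  | zero => simp
  | succ j ih => simpa only [pow_succ] using ih.matrix_mul hW

theorem DifferentiableOn.matrix_aeval (hW : DifferentiableOn ℂ W s) (p : ℂ[X]) :
    DifferentiableOn ℂ (fun x => aeval (W x) p) s := by
  simp only [aeval_eq_sum_range]
  exact .fun_sum fun i _ => (hW.matrix_pow i).fun_const_smul _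

theorem DifferentiableOn.matrix_det (hW : DifferentiableOn ℂ W s) :
    DifferentiableOn ℂ (fun x => (W x).det) s := by
  have h x : (W x).det =
      MvPolynomial.eval (fun q => W x q.1 q.2) (Matrix.mvPolynomialX ι ι ℂ).det := by
    rw [RingHom.map_det, Matrix.mvPolynomialX_mapMatrix_eval]
  exact (hW.eval_mvPolynomial_entries _).congr fun x _ => h x

theorem DifferentiableOn.matrix_adjugate (hW : DifferentiableOn ℂ W s) :
    DifferentiableOn ℂ (fun x => (W x).adjugate) s := by
  have h x : (W x).adjugate =
      (MvPolynomial.eval fun q => W x q.1 q.2).mapMatrix (Matrix.mvPolynomialX ι ι ℂ).adjugate := by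
    rw [RingHom.map_adjugate, Matrix.mvPolynomialX_mapMatrix_eval]
  rw [differentiableOn_matrix_iff]
  intro i j
  simpa only [h, RingHom.mapMatrix_apply, Matrix.map_apply] using
    hW.eval_mvPolynomial_entries ((Matrix.mvPolynomialX ι ι ℂ).adjugate i j)

theorem DifferentiableOn.matrix_inv (hW : DifferentiableOn ℂ W s)
    (hdet : ∀ x ∈ s, (W x).det ≠ 0) : DifferentiableOn ℂ (fun x => (W x)⁻¹) s := by
  simp only [Matrix.inv_def, Ring.inverse_eq_inv']
  exact (hW.matrix_det.inv hdet).smul hW.matrix_adjugate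

theorem DifferentiableOn.charpoly_coeff (hW : DifferentiableOn ℂ W s) (i : ℕ) :
    DifferentiableOn ℂ (fun x => (W x).charpoly.coeff i) s := by
  have h x : (W x).charpoly.coeff i =
      MvPolynomial.eval (fun q => W x q.1 q.2) ((Matrix.charpoly.univ ℂ ι).coeff i) := by
    rw [MvPolynomial.eval, Matrix.charpoly.univ_coeff_eval₂Hom]
    rfl
  exact (hW.eval_mvPolynomial_entries _).congr fun x _ => h x

end MatrixDifferentiability

section SchwarzLemma

variable {n : ℕ} [NeZero n]

theorem norm_le_one_of_mem_spectrum_of_sphere {M : ℂ → Matrix (Fin n) (Fin n) ℂ} {ρ : ℝ}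
    (hρ : 0 < ρ) (hM : DifferentiableOn ℂ M (closedBall 0 ρ))
    (hsphere : ∀ w ∈ sphere (0 : ℂ) ρ, ∀ ω ∈ spectrum ℂ (M w), ‖ω‖ ≤ 1)
    {z : ℂ} (hz : z ∈ closedBall (0 : ℂ) ρ) {c : ℂ} (hc : c ∈ spectrum ℂ (M z)) : ‖c‖ ≤ 1 := by
  have hcoeff : ∀ j i, ‖(M z ^ j).charpoly.coeff i‖ ≤ 2 ^ n := by
    intro j i
    refine Complex.norm_le_of_forall_mem_frontier_norm_le
      (f := fun w => (M w ^ j).charpoly.coeff i) isBounded_ball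
      (DifferentiableOn.diffContOnCl ?_) (fun w hw => ?_) (by rwa [closure_ball 0 hρ.ne'])
    · rw [closure_ball 0 hρ.ne']
      exact (hM.matrix_pow j).charpoly_coeff i
    · rw [frontier_ball 0 hρ.ne'] at hw
      refine Matrix.norm_charpoly_coeff_le_two_pow _ (fun ν hν => ?_) i
      rw [spectrum.map_pow_of_nonempty (Matrix.spectrum_nonempty _)] at hν
      obtain ⟨ω, hω, rfl⟩ := hν
      rw [norm_pow]
      exact pow_le_one₀ (norm_nonneg ω) (hsphere w hw ω hω)
  have hbounded : ∀ j, ‖c‖ ^ j < 2 ^ n + 1 := fun j => by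
    rw [← norm_pow]
    exact Matrix.norm_lt_of_mem_spectrum_of_norm_charpoly_coeff_le (hcoeff j)
      (spectrum.pow_mem_pow _ j hc)
  by_contra! h
  obtain ⟨j, hj⟩ := pow_unbounded_of_one_lt (2 ^ n + 1 : ℝ) h
  exact (hbounded j).not_gt hj

theorem norm_le_one_of_mem_spectrum_of_forall_eq_smul {F M : ℂ → Matrix (Fin n) (Fin n) ℂ}
    (hM : DifferentiableOn ℂ M (ball 0 1)) (hFM : ∀ w, F w = w • M w)
    (hF1 : ∀ w ∈ ball (0 : ℂ) 1, sRad (F w) ≤ 1) {z : ℂ} (hz : z ∈ ball (0 : ℂ) 1) {c : ℂ}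
    (hc : c ∈ spectrum ℂ (M z)) : ‖c‖ ≤ 1 := by
  rw [mem_ball_zero_iff] at hz
  have hρ : ∀ ρ ∈ Ioo ‖z‖ 1, ρ * ‖c‖ ≤ 1 := by
    rintro ρ ⟨hzρ, hρ1⟩
    have hρ0 : 0 < ρ := (norm_nonneg z).trans_lt hzρ
    have hsub : closedBall (0 : ℂ) ρ ⊆ ball 0 1 := closedBall_subset_ball hρ1
    have hsphere : ∀ w ∈ sphere (0 : ℂ) ρ, ∀ ω ∈ spectrum ℂ ((ρ : ℂ) • M w), ‖ω‖ ≤ 1 := by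
      intro w hw ω hω
      obtain ⟨ν, hν, rfl⟩ := exists_mem_spectrum_of_mem_spectrum_smul hω
      have hwν : w * ν ∈ spectrum ℂ (F w) := hFM w ▸ mul_mem_spectrum_smul w hν
      calc ‖(ρ : ℂ) * ν‖ = ‖w * ν‖ := by
            rw [norm_mul, norm_mul, Complex.norm_real, Real.norm_of_nonneg hρ0.le,
              mem_sphere_zero_iff_norm.mp hw]
        _ ≤ 1 := (norm_le_sRad hwν).trans (hF1 w (hsub (sphere_subset_closedBall hw)))
    have := norm_le_one_of_mem_spectrum_of_sphere hρ0 ((hM.mono hsub).const_smul (ρ : ℂ))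
      hsphere (mem_closedBall_zero_iff.mpr hzρ.le) (mul_mem_spectrum_smul (ρ : ℂ) hc)
    rwa [norm_mul, Complex.norm_real, Real.norm_of_nonneg hρ0.le] at this
  have hlim : Tendsto (fun ρ : ℝ => ρ * ‖c‖) (𝓝[<] 1) (𝓝 ‖c‖) := by
    simpa using ((continuous_mul_const ‖c‖).tendsto 1).mono_left nhdsWithin_le_nhds
  exact le_of_tendsto hlim (eventually_of_mem (Ioo_mem_nhdsLT hz) hρ)

theorem sRad_le_norm_of_map_zero {F : ℂ → Matrix (Fin n) (Fin n) ℂ}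
    (hF : DifferentiableOn ℂ F (ball 0 1)) (hF0 : F 0 = 0)
    (hF1 : ∀ w ∈ ball (0 : ℂ) 1, sRad (F w) ≤ 1) {z : ℂ} (hz : z ∈ ball (0 : ℂ) 1) :
    sRad (F z) ≤ ‖z‖ := by
  have hM : DifferentiableOn ℂ (dslope F 0) (ball 0 1) :=
    (Complex.differentiableOn_dslope (isOpen_ball.mem_nhds (mem_ball_self one_pos))).mpr hF
  have hFM : ∀ w, F w = w • dslope F 0 w := fun w => by
    simpa [hF0] using (sub_smul_dslope F 0 w).symm
  refine sRad_le fun μ hμ => ?_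
  rw [hFM z] at hμ
  obtain ⟨c, hc, rfl⟩ := exists_mem_spectrum_of_mem_spectrum_smul hμ
  rw [norm_mul]
  exact mul_le_of_le_one_right (norm_nonneg z)
    (norm_le_one_of_mem_spectrum_of_forall_eq_smul hM hFM hF1 hz hc)

theorem sRad_le_sRad_of_map_zero {Φ : Matrix (Fin n) (Fin n) ℂ → Matrix (Fin n) (Fin n) ℂ}
    (hΦ : DifferentiableOn ℂ Φ (specBall n)) (hΦ1 : ∀ W ∈ specBall n, sRad (Φ W) ≤ 1)
    (hΦ0 : Φ 0 = 0) {X : Matrix (Fin n) (Fin n) ℂ} (hX : X ∈ specBall n) :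
    sRad (Φ X) ≤ sRad X := by
  refine le_of_forall_gt_imp_ge_of_dense fun t ht => ?_
  rcases le_or_gt 1 t with h1 | h1
  · exact (hΦ1 X hX).trans h1
  have ht0 : 0 < t := (sRad_nonneg X).trans_lt ht
  set L : ℂ → Matrix (Fin n) (Fin n) ℂ := fun z => (z / t) • X
  have hL : MapsTo L (ball 0 1) (specBall n) := by
    intro z hz
    refine (sRad_smul_le _ X).trans_lt ?_
    rw [norm_div, Complex.norm_real, Real.norm_of_nonneg ht0.le, div_mul_eq_mul_div,
      div_lt_one ht0]
    exact (mul_le_of_le_one_left (sRad_nonneg X) (mem_ball_zero_iff.mp hz).le).trans_lt ht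
  have hLd : DifferentiableOn ℂ L (ball 0 1) :=
    (differentiableOn_id.div_const _).smul_const X
  have hΦL := sRad_le_norm_of_map_zero (hΦ.comp hLd hL) (by simp [L, hΦ0])
    (fun w hw => hΦ1 _ (hL hw)) (z := t) (by
      rwa [mem_ball_zero_iff, Complex.norm_real, Real.norm_of_nonneg ht0.le])
  simpa [L, ht0.ne', Real.norm_of_nonneg ht0.le] using hΦL

end SchwarzLemma

section Mobius

theorem norm_one_sub_conj_mul_sq_sub_norm_sub_sq (a z : ℂ) :
    ‖1 - conj a * z‖ ^ 2 - ‖z - a‖ ^ 2 = (1 - ‖a‖ ^ 2) * (1 - ‖z‖ ^ 2) := by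
  simp only [Complex.sq_norm, Complex.normSq_apply, Complex.sub_re, Complex.sub_im,
    Complex.mul_re, Complex.mul_im, Complex.one_re, Complex.one_im, Complex.conj_re,
    Complex.conj_im]
  ring

theorem one_sub_mul_le_norm_one_sub_conj_mul (a z : ℂ) : 1 - ‖a‖ * ‖z‖ ≤ ‖1 - conj a * z‖ := by
  simpa [norm_mul] using norm_sub_norm_le (1 : ℂ) (conj a * z)

variable {a z : ℂ}

theorem norm_mobius_le_one (ha : ‖a‖ < 1) (hz : ‖z‖ < 1) :
    ‖(z - a) / (1 - conj a * z)‖ ≤ 1 := by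
  have hD := one_sub_mul_le_norm_one_sub_conj_mul a z
  have hid := norm_one_sub_conj_mul_sq_sub_norm_sub_sq a z
  rw [norm_div]
  refine div_le_one_of_le₀ ((pow_le_pow_iff_left₀ (norm_nonneg _) (norm_nonneg _)
    two_ne_zero).mp ?_) (norm_nonneg _)
  nlinarith [mul_nonneg (by nlinarith [norm_nonneg a] : (0 : ℝ) ≤ 1 - ‖a‖ ^ 2)
    (by nlinarith [norm_nonneg z] : (0 : ℝ) ≤ 1 - ‖z‖ ^ 2)]

theorem sub_div_one_sub_mul_le_norm_mobius {r : ℝ} (ha : ‖a‖ ≤ r) (hr : r < 1)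
    (hz : ‖z‖ < 1) (hrz : r ≤ ‖z‖) :
    (‖z‖ - r) / (1 - r * ‖z‖) ≤ ‖(z - a) / (1 - conj a * z)‖ := by
  have hD := one_sub_mul_le_norm_one_sub_conj_mul a z
  have hid := norm_one_sub_conj_mul_sq_sub_norm_sub_sq a z
  set x := ‖a‖
  set b := ‖z‖
  set D := ‖1 - conj a * z‖
  set N := ‖z - a‖
  have hx0 : 0 ≤ x := norm_nonneg a
  have hxb : 0 < 1 - x * b := by nlinarith
  have hrb : 0 < 1 - r * b := by nlinarith
  have hmono : (b - r) / (1 - r * b) ≤ (b - x) / (1 - x * b) := by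
    rw [div_le_div_iff₀ hrb hxb]
    nlinarith [mul_nonneg (sub_nonneg.mpr ha) (by nlinarith : (0 : ℝ) ≤ 1 - b * b)]
  have hsq : ((b - x) * D) ^ 2 ≤ (N * (1 - x * b)) ^ 2 := by
    have hK : 0 ≤ (1 - x ^ 2) * (1 - b ^ 2) := mul_nonneg (by nlinarith) (by nlinarith)
    have : (N * (1 - x * b)) ^ 2 - ((b - x) * D) ^ 2 =
        (1 - x ^ 2) * (1 - b ^ 2) * (D ^ 2 - (1 - x * b) ^ 2) := by
      linear_combination (-(1 - x * b) ^ 2) * hid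
    nlinarith [mul_nonneg hK (by nlinarith : (0 : ℝ) ≤ D ^ 2 - (1 - x * b) ^ 2)]
  rw [norm_div]
  refine hmono.trans ?_
  rw [div_le_div_iff₀ hxb (hxb.trans_le hD)]
  exact (pow_le_pow_iff_left₀ (mul_nonneg (by linarith) (norm_nonneg _))
    (mul_nonneg (norm_nonneg _) hxb.le) two_ne_zero).mp hsq

end Mobius

section Blaschke

variable {n : ℕ}

noncomputable def blaschke (s : Multiset ℂ) (z : ℂ) : ℂ :=
  (s.map fun a => (z - a) / (1 - conj a * z)).prod

noncomputable def blaschkeNum (s : Multiset ℂ) : ℂ[X] :=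
  (s.map fun a => X - C a).prod

noncomputable def blaschkeDen (s : Multiset ℂ) : ℂ[X] :=
  (s.map fun a => 1 - C (conj a) * X).prod

noncomputable def blaschkeMat (s : Multiset ℂ) (W : Matrix (Fin n) (Fin n) ℂ) :
    Matrix (Fin n) (Fin n) ℂ :=
  aeval W (blaschkeNum s) * (aeval W (blaschkeDen s))⁻¹

variable {s : Multiset ℂ} {z : ℂ}

theorem blaschke_eq_eval_div (s : Multiset ℂ) (z : ℂ) :
    blaschke s z = (blaschkeNum s).eval z / (blaschkeDen s).eval z := by
  simp [blaschke, blaschkeNum, blaschkeDen, eval_multiset_prod, Multiset.map_map,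
    Multiset.prod_map_div]

theorem eval_blaschkeDen_ne_zero (hs : ∀ a ∈ s, ‖a‖ < 1) (hz : ‖z‖ < 1) :
    (blaschkeDen s).eval z ≠ 0 := by
  simp only [blaschkeDen, eval_multiset_prod, Multiset.map_map]
  refine Multiset.prod_ne_zero fun h => ?_
  obtain ⟨a, ha, h0⟩ := Multiset.mem_map.mp h
  have := one_sub_mul_le_norm_one_sub_conj_mul a z
  simp only [Function.comp_apply, eval_sub, eval_one, eval_mul, eval_C, eval_X] at h0
  rw [h0, norm_zero] at this
  nlinarith [norm_nonneg a, norm_nonneg z, hs a ha]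

theorem norm_blaschke_le_one (hs : ∀ a ∈ s, ‖a‖ < 1) (hz : ‖z‖ < 1) : ‖blaschke s z‖ ≤ 1 :=
  Multiset.norm_prod_le_one fun _ h =>
    let ⟨a, ha, h⟩ := Multiset.mem_map.mp h
    h ▸ norm_mobius_le_one (hs a ha) hz

theorem pow_card_le_norm_blaschke {r : ℝ} (hs : ∀ a ∈ s, ‖a‖ ≤ r) (hr : r < 1) (hz : ‖z‖ < 1)
    (hrz : r ≤ ‖z‖) :
    ((‖z‖ - r) / (1 - r * ‖z‖)) ^ Multiset.card s ≤ ‖blaschke s z‖ := by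
  have hden : 0 < 1 - r * ‖z‖ := by
    nlinarith [mul_le_mul_of_nonneg_right hrz (norm_nonneg z),
      mul_le_mul_of_nonneg_right hz.le (norm_nonneg z)]
  have hψ : 0 ≤ (‖z‖ - r) / (1 - r * ‖z‖) := div_nonneg (by linarith) hden.le
  calc ((‖z‖ - r) / (1 - r * ‖z‖)) ^ Multiset.card s
      = (s.map fun _ => (‖z‖ - r) / (1 - r * ‖z‖)).prod := by simp
    _ ≤ (s.map fun a => ‖(z - a) / (1 - conj a * z)‖).prod :=
        Multiset.prod_map_le_prod_map₀ _ _ (fun _ _ => hψ)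
          fun a ha => sub_div_one_sub_mul_le_norm_mobius (hs a ha) hr hz hrz
    _ = ‖blaschke s z‖ := by
        rw [blaschke, Complex.norm_multiset_prod, Multiset.map_map]
        rfl

theorem blaschkeMat_roots_minpoly_self (A : Matrix (Fin n) (Fin n) ℂ) :
    blaschkeMat (minpoly ℂ A).roots A = 0 := by
  rw [blaschkeMat, blaschkeNum, ← (IsAlgClosed.splits _).eq_prod_roots_of_monic
    (minpoly.monic (Algebra.IsIntegral.isIntegral A)), minpoly.aeval, zero_mul]

end Blaschke

section RationalSpectralMapping

variable {n : ℕ} [NeZero n] {W : Matrix (Fin n) (Fin n) ℂ}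

theorem isUnit_aeval_of_forall_eval_ne_zero {q : ℂ[X]}
    (hq : ∀ β ∈ spectrum ℂ W, q.eval β ≠ 0) : IsUnit (aeval W q) := by
  rw [← spectrum.zero_notMem_iff ℂ, spectrum.map_polynomial_aeval_of_nonempty _ _
    (Matrix.spectrum_nonempty W)]
  rintro ⟨β, hβ, h0⟩
  exact hq β hβ h0

theorem spectrum_aeval_mul_inv_aeval {p q : ℂ[X]} (hq : ∀ β ∈ spectrum ℂ W, q.eval β ≠ 0) :
    spectrum ℂ (aeval W p * (aeval W q)⁻¹) = (fun β => p.eval β / q.eval β) '' spectrum ℂ W := by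
  have hQ := isUnit_aeval_of_forall_eval_ne_zero hq
  ext ν
  have hfac : algebraMap ℂ _ ν - aeval W p * (aeval W q)⁻¹ =
      aeval W (C ν * q - p) * (aeval W q)⁻¹ := by
    rw [map_sub, map_mul, aeval_C, sub_mul, mul_assoc,
      Matrix.mul_nonsing_inv _ ((Matrix.isUnit_iff_isUnit_det _).mp hQ), mul_one]
  rw [spectrum.mem_iff, hfac, (Matrix.isUnit_nonsing_inv_iff.mpr hQ).mul_right_iff,
    ← spectrum.zero_mem_iff ℂ, spectrum.map_polynomial_aeval_of_nonempty _ _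
    (Matrix.spectrum_nonempty W)]
  refine exists_congr fun β => and_congr_right fun hβ => ?_
  change eval β (C ν * q - p) = 0 ↔ eval β p / eval β q = ν
  rw [eval_sub, eval_mul, eval_C, div_eq_iff (hq β hβ), sub_eq_zero, eq_comm]

end RationalSpectralMapping

section BlaschkeMatrix

variable {n : ℕ} [NeZero n] {s : Multiset ℂ}

theorem spectrum_blaschkeMat (hs : ∀ a ∈ s, ‖a‖ < 1) {W : Matrix (Fin n) (Fin n) ℂ}
    (hW : W ∈ specBall n) : spectrum ℂ (blaschkeMat s W) = blaschke s '' spectrum ℂ W := by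
  rw [blaschkeMat, spectrum_aeval_mul_inv_aeval fun β hβ =>
    eval_blaschkeDen_ne_zero hs ((norm_le_sRad hβ).trans_lt hW)]
  simp only [blaschke_eq_eval_div]

theorem sRad_blaschkeMat_le_one (hs : ∀ a ∈ s, ‖a‖ < 1) {W : Matrix (Fin n) (Fin n) ℂ}
    (hW : W ∈ specBall n) : sRad (blaschkeMat s W) ≤ 1 := by
  refine sRad_le fun μ hμ => ?_
  rw [spectrum_blaschkeMat hs hW] at hμ
  obtain ⟨β, hβ, rfl⟩ := hμ
  exact norm_blaschke_le_one hs ((norm_le_sRad hβ).trans_lt hW)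

theorem differentiableOn_blaschkeMat (hs : ∀ a ∈ s, ‖a‖ < 1) :
    DifferentiableOn ℂ (blaschkeMat s) (specBall n) := by
  refine (differentiableOn_id.matrix_aeval _).matrix_mul
    ((differentiableOn_id.matrix_aeval _).matrix_inv fun W hW => ?_)
  exact ((Matrix.isUnit_iff_isUnit_det _).mp (isUnit_aeval_of_forall_eval_ne_zero
    fun β hβ => eval_blaschkeDen_ne_zero hs ((norm_le_sRad hβ).trans_lt hW))).ne_zero

end BlaschkeMatrix

theorem norm_le_sRad_of_mem_roots_minpoly {n : ℕ} {A : Matrix (Fin n) (Fin n) ℂ} {a : ℂ}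
    (ha : a ∈ (minpoly ℂ A).roots) : ‖a‖ ≤ sRad A :=
  norm_le_sRad (Matrix.mem_spectrum_iff_isRoot_charpoly.mpr
    ((isRoot_of_mem_roots ha).dvd (Matrix.minpoly_dvd_charpoly A)))

theorem le_div_of_pow_mobius_le {r m x : ℝ} {d : ℕ} (hd : d ≠ 0) (hr0 : 0 ≤ r) (hr1 : r < 1)
    (hm1 : m < 1) (hx : 0 ≤ x) (h : r ≤ m → ((m - r) / (1 - r * m)) ^ d ≤ x) :
    m ≤ (x ^ ((1 : ℝ) / d) + r) / (1 + r * x ^ ((1 : ℝ) / d)) := by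
  set t := x ^ ((1 : ℝ) / d)
  have ht0 : 0 ≤ t := Real.rpow_nonneg hx _
  have htd : t ^ d = x := by simpa [t, one_div] using Real.rpow_inv_natCast_pow hx hd
  rw [le_div_iff₀ (by positivity)]
  rcases le_or_gt m r with hmr | hrm
  · nlinarith [mul_le_mul_of_nonneg_right hmr (mul_nonneg hr0 ht0),
      mul_nonneg (mul_nonneg (sub_nonneg.2 hr1.le) (by linarith : 0 ≤ 1 + r)) ht0]
  · have hden : 0 < 1 - r * m := by nlinarith
    have hψ : (m - r) / (1 - r * m) ≤ t :=
      (pow_le_pow_iff_left₀ (div_nonneg (by linarith) hden.le) ht0 hd).mp (htd ▸ h hrm.le)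
    rw [div_le_iff₀ hden] at hψ
    nlinarith

/-- (Theorem 2) If `G : Ω_n → Ω_n` is holomorphic (`n ≥ 2`) and `d_G` is the degree of
the minimal polynomial of `G(0)`, then for every `X ∈ Ω_n`:
`r(G(X)) ≤ (r(X)^{1/d_G} + r(G(0))) / (1 + r(G(0))·r(X)^{1/d_G})`. -/
theorem stmt18 {n : ℕ} (hn : 2 ≤ n)
    (G : Matrix (Fin n) (Fin n) ℂ → Matrix (Fin n) (Fin n) ℂ)
    (hol : DifferentiableOn ℂ G (specBall n))
    (hmap : Set.MapsTo G (specBall n) (specBall n)) :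
    ∀ X ∈ specBall n,
      sRad (G X) ≤
        (sRad X ^ ((1 : ℝ) / (minpoly ℂ (G 0)).natDegree) + sRad (G 0)) /
          (1 + sRad (G 0) * sRad X ^ ((1 : ℝ) / (minpoly ℂ (G 0)).natDegree)) := by
  intro X hX
  have : NeZero n := ⟨by omega⟩
  set s := (minpoly ℂ (G 0)).roots
  have hG0 : sRad (G 0) < 1 := hmap zero_mem_specBall
  have hs : ∀ a ∈ s, ‖a‖ ≤ sRad (G 0) := fun a => norm_le_sRad_of_mem_roots_minpoly
  have hs1 : ∀ a ∈ s, ‖a‖ < 1 := fun a ha => (hs a ha).trans_lt hG0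
  have hcard : Multiset.card s = (minpoly ℂ (G 0)).natDegree :=
    splits_iff_card_roots.mp (IsAlgClosed.splits _)
  have hBX : sRad (blaschkeMat s (G X)) ≤ sRad X :=
    sRad_le_sRad_of_map_zero ((differentiableOn_blaschkeMat hs1).comp hol hmap)
      (fun W hW => sRad_blaschkeMat_le_one hs1 (hmap hW)) (blaschkeMat_roots_minpoly_self _) hX
  refine sRad_le fun μ hμ => ?_
  have hμ1 : ‖μ‖ < 1 := (norm_le_sRad hμ).trans_lt (hmap hX)
  refine le_div_of_pow_mobius_le (minpoly.natDegree_pos (Algebra.IsIntegral.isIntegral _)).ne'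
    (sRad_nonneg _) hG0 hμ1 (sRad_nonneg X) fun hle => ?_
  calc _ ≤ ‖blaschke s μ‖ := hcard ▸ pow_card_le_norm_blaschke hs hG0 hμ1 hle
    _ ≤ sRad (blaschkeMat s (G X)) :=
        norm_le_sRad ((spectrum_blaschkeMat hs1 (hmap hX)).symm ▸ mem_image_of_mem _ hμ)
    _ ≤ sRad X := hBX
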